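/- Let β > 0 and let (I_x)_{x∈ℤ} satisfy the symmetry condition I_n = I_{−n+1} for all n ∈ ℤ and be periodic, i.e. I_{m+p} = I_m for some period p ≥ 1 and all m ∈ ℤ. Then Z_n^± > 0 for every n ∈ ℕ and the ratio Z_n^+ / Z_n^± converges to 1 as n → ∞. -/

import Mathlib

open Finset

/-- Spin configurations on the box `[-n, n] ⊆ ℤ`, encoded as boolean functions
(`true` ↔ spin `+1`, `false` ↔ spin `-1`). -/
abbrev Config (n : ℕ) := {x // x ∈ Finset.Icc (-(n : ℤ)) (n : ℤ)} → Bool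

/-- The spin value `±1` of the configuration `σ` at the site `x` (value `1` off the box). -/
noncomputable def spin {n : ℕ} (σ : Config n) (x : ℤ) : ℝ :=
  if h : x ∈ Finset.Icc (-(n : ℤ)) (n : ℤ) then (if σ ⟨x, h⟩ then 1 else -1) else 1

/-- The Hamiltonian `H_n^+` with plus boundary condition on both sides. -/
noncomputable def Hplus (I : ℤ → ℝ) (n : ℕ) (σ : Config n) : ℝ :=
  (∑ x ∈ Finset.Icc (-(n : ℤ) + 1) (n : ℤ),
      I x * (if spin σ (x - 1) ≠ spin σ x then 1 else 0))
    + I (-(n : ℤ)) * (if spin σ (-(n : ℤ)) ≠ 1 then 1 else 0)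
    + I ((n : ℤ) + 1) * (if spin σ (n : ℤ) ≠ 1 then 1 else 0)

/-- The Hamiltonian `H_n^±` (minus boundary on the left, plus on the right). -/
noncomputable def Hpm (I : ℤ → ℝ) (n : ℕ) (σ : Config n) : ℝ :=
  Hplus I n σ + I (-(n : ℤ)) * spin σ (-(n : ℤ))

/-- The partition function `Z_n^+`. -/
noncomputable def Zplus (β : ℝ) (I : ℤ → ℝ) (n : ℕ) : ℝ :=
  ∑ σ : Config n, Real.exp (-β * Hplus I n σ)

/-- The partition function `Z_n^±`. -/
noncomputable def Zpm (β : ℝ) (I : ℤ → ℝ) (n : ℕ) : ℝ :=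
  ∑ σ : Config n, Real.exp (-β * Hpm I n σ)

/-!
Reading a configuration together with its boundary spins as an open chain, its Boltzmann weight
is a product over the `2n + 2` bonds of `1` or `w_x = exp (-β I_x)`, according to whether the bond
carries a domain wall. Summing out the chain spins one at a time (the transfer matrix
`[[1, w], [w, 1]]` has eigenvalues `1 ± w`) gives `2 Z_n^+ = P + Q` and `2 Z_n^± = P - Q` with
`P = ∏ (1 + w_x)` and `Q = ∏ (1 - w_x)`. Hence `Z_n^+ / Z_n^± = (1 + r_n) / (1 - r_n)` with
`r_n = Q / P = ∏ tanh (β I_x / 2)`, and periodicity bounds every factor `|tanh (β I_x / 2)|` by a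
single constant `M < 1`, so `r_n → 0`.
-/

section Chain

variable {R : Type*} [CommRing R]

def chainSpin {m : ℕ} (b₀ b₁ : Bool) (s : Fin m → Bool) : ℕ → Bool
  | 0 => b₀
  | k + 1 => if h : k < m then s ⟨k, h⟩ else b₁

def bondWeight (w : ℕ → R) (e : ℕ → Bool) (k : ℕ) : R :=
  if e k = e (k + 1) then 1 else w k

theorem chainSpin_cons_succ {m : ℕ} (b₀ b₁ a : Bool) (t : Fin m → Bool) :
    (fun k => chainSpin b₀ b₁ (Fin.cons a t : Fin (m + 1) → Bool) (k + 1)) = chainSpin a b₁ t := by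
  funext k
  rcases k with _ | k
  · simp [chainSpin]
  · by_cases h : k < m
    · simp only [chainSpin, h, dite_true, Nat.add_lt_add_iff_right]
      exact Fin.cons_succ (α := fun _ => Bool) a t ⟨k, h⟩
    · simp [chainSpin, h]

theorem sum_prod_bondWeight_succ (w : ℕ → R) (m : ℕ) (b₀ b₁ : Bool) :
    ∑ s : Fin (m + 1) → Bool, ∏ k ∈ range (m + 2), bondWeight w (chainSpin b₀ b₁ s) k =
      ∑ a : Bool, (if b₀ = a then 1 else w 0) * ∑ t : Fin m → Bool,
        ∏ k ∈ range (m + 1), bondWeight (fun k => w (k + 1)) (chainSpin a b₁ t) k := by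
  rw [← (Fin.consEquiv fun _ => Bool).sum_comp, Fintype.sum_prod_type]
  refine sum_congr rfl fun a _ => ?_
  rw [mul_sum]
  refine sum_congr rfl fun t _ => ?_
  change ∏ k ∈ range (m + 2),
    bondWeight w (chainSpin b₀ b₁ (Fin.cons a t : Fin (m + 1) → Bool)) k = _
  rw [prod_range_succ', mul_comm]
  congr 1
  rw [← chainSpin_cons_succ b₀ b₁ a t]
  rfl

theorem two_mul_sum_prod_bondWeight (w : ℕ → R) (m : ℕ) (b₀ b₁ : Bool) :
    2 * ∑ s : Fin m → Bool, ∏ k ∈ range (m + 1), bondWeight w (chainSpin b₀ b₁ s) k =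
      ∏ k ∈ range (m + 1), (1 + w k) +
        (if b₀ = b₁ then 1 else -1) * ∏ k ∈ range (m + 1), (1 - w k) := by
  induction m generalizing w b₀ with
  | zero => cases b₀ <;> cases b₁ <;> simp [bondWeight, chainSpin] <;> ring
  | succ m ih =>
    rw [sum_prod_bondWeight_succ, mul_sum, Fintype.sum_bool, mul_left_comm, ih, mul_left_comm, ih,
      prod_range_succ' (fun k => 1 + w k), prod_range_succ' (fun k => 1 - w k)]
    cases b₀ <;> cases b₁ <;> simp <;> ring

end Chain

theorem Function.Periodic.exists_forall_le_int {α : Type*} [LinearOrder α] {f : ℤ → α} {c : ℤ}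
    (hf : Function.Periodic f c) (hc : 0 < c) : ∃ x₀, ∀ x, f x ≤ f x₀ := by
  obtain ⟨x₀, -, hmax⟩ := (Finset.Ico 0 c).exists_max_image f ⟨0, by simpa⟩
  refine ⟨x₀, fun x => ?_⟩
  obtain ⟨y, hy, hxy⟩ := hf.exists_mem_Ico₀ hc x
  exact hxy ▸ hmax y (by simpa using hy)

theorem Real.one_sub_exp_neg_div_one_add_exp_neg (x : ℝ) :
    (1 - Real.exp (-x)) / (1 + Real.exp (-x)) = Real.tanh (x / 2) := by
  have h1 : Real.exp (-x) = Real.exp (-(x / 2)) ^ 2 := by rw [← Real.exp_nat_mul]; ring_nf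
  have h2 : Real.exp (x / 2) = (Real.exp (-(x / 2)))⁻¹ := by rw [Real.exp_neg, inv_inv]
  have hpos := Real.exp_pos (-(x / 2))
  rw [Real.tanh_eq, h1, h2]
  field_simp

theorem tendsto_one_add_div_one_sub {α : Type*} {l : Filter α} {r : α → ℝ}
    (hr : Filter.Tendsto r l (nhds 0)) :
    Filter.Tendsto (fun a => (1 + r a) / (1 - r a)) l (nhds 1) := by
  have h := (hr.const_add 1).div (hr.const_sub 1) (by norm_num)
  rwa [add_zero, sub_zero, div_one] at h

def boxEquiv (n : ℕ) : Fin (2 * n + 1) ≃ {x // x ∈ Icc (-(n : ℤ)) n} where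
  toFun k := ⟨-n + k, by simp only [mem_Icc]; omega⟩
  invFun x := ⟨(x.1 + n).toNat, by have := mem_Icc.1 x.2; omega⟩
  left_inv k := by ext; simp
  right_inv x := by ext; have := mem_Icc.1 x.2; simp only [Int.ofNat_toNat]; omega

def configEquiv (n : ℕ) : (Fin (2 * n + 1) → Bool) ≃ Config n :=
  (boxEquiv n).arrowCongr (Equiv.refl Bool)

theorem spin_of_notMem {n : ℕ} (σ : Config n) {x : ℤ} (hx : x ∉ Icc (-(n : ℤ)) n) :
    spin σ x = 1 :=
  dif_neg hx

theorem spin_configEquiv (n : ℕ) (s : Fin (2 * n + 1) → Bool) (k : ℕ) :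
    spin (configEquiv n s) (-n + k - 1) = if chainSpin true true s k then 1 else -1 := by
  rcases k with _ | k
  · rw [spin_of_notMem _ (by simp)]
    rfl
  · by_cases h : k < 2 * n + 1
    · have hx : -(n : ℤ) + (k + 1 : ℕ) - 1 ∈ Icc (-(n : ℤ)) n := by simp only [mem_Icc]; omega
      have hs : configEquiv n s ⟨_, hx⟩ = s ⟨k, h⟩ :=
        congrArg s (Fin.ext (by simp only [boxEquiv, Equiv.symm_mk, Equiv.coe_fn_mk]; omega))
      rw [spin, dif_pos hx, hs]
      simp [chainSpin, h]
    · rw [spin_of_notMem _ (by simp only [mem_Icc]; omega)]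
      simp [chainSpin, h]

-- The boundary terms are the bonds to the sites `-n - 1` and `n + 1`, where `spin` is `1`.
theorem Hplus_eq_sum_range (I : ℤ → ℝ) (n : ℕ) (σ : Config n) :
    Hplus I n σ = ∑ k ∈ range (2 * n + 2),
      I (-n + k) * if spin σ (-n + k - 1) ≠ spin σ (-n + k) then 1 else 0 := by
  rw [Hplus, sum_range_succ, sum_range_succ', Int.Icc_eq_finset_map, sum_map,
    show (n + 1 - (-n + 1) : ℤ).toNat = 2 * n by omega]
  congr 1
  congr 1
  · refine sum_congr rfl fun k _ => ?_
    simp only [Function.Embedding.trans_apply, Nat.castEmbedding_apply, addLeftEmbedding_apply]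
    rw [show -(n : ℤ) + 1 + k = -n + ((k + 1 : ℕ) : ℤ) by push_cast; ring]
  · rw [spin_of_notMem σ (x := -n + (0 : ℕ) - 1) (by simp)]
    simp [ne_comm]
  · rw [spin_of_notMem σ (x := -n + (2 * n + 1 : ℕ)) (by simp only [mem_Icc]; omega)]
    push_cast
    ring_nf

noncomputable def wallWeight (β : ℝ) (I : ℤ → ℝ) (n k : ℕ) : ℝ :=
  Real.exp (-β * I (-n + k))

theorem exp_neg_mul_Hplus_configEquiv (β : ℝ) (I : ℤ → ℝ) (n : ℕ) (s : Fin (2 * n + 1) → Bool) :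
    Real.exp (-β * Hplus I n (configEquiv n s)) =
      ∏ k ∈ range (2 * n + 2), bondWeight (wallWeight β I n) (chainSpin true true s) k := by
  rw [Hplus_eq_sum_range, mul_sum, Real.exp_sum]
  refine prod_congr rfl fun k _ => ?_
  have hsucc := spin_configEquiv n s (k + 1)
  rw [show -(n : ℤ) + (k + 1 : ℕ) - 1 = -n + k by push_cast; ring] at hsucc
  rw [spin_configEquiv, hsucc, bondWeight, wallWeight]
  cases chainSpin true true s k <;> cases chainSpin true true s (k + 1) <;> norm_num

-- The extra term `I (-n) * spin σ (-n)` flips the boundary spin at `-n - 1` to `-1`.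
theorem exp_neg_mul_Hpm_configEquiv (β : ℝ) (I : ℤ → ℝ) (n : ℕ) (s : Fin (2 * n + 1) → Bool) :
    Real.exp (-β * Hpm I n (configEquiv n s)) =
      ∏ k ∈ range (2 * n + 2), bondWeight (wallWeight β I n) (chainSpin false true s) k := by
  have hspin := spin_configEquiv n s 1
  rw [show -(n : ℤ) + (1 : ℕ) - 1 = -n by push_cast; ring] at hspin
  have hsucc : chainSpin false true s 1 = chainSpin true true s 1 := rfl
  rw [Hpm, mul_add, Real.exp_add, exp_neg_mul_Hplus_configEquiv, prod_range_succ' _ (2 * n + 1),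
    prod_range_succ' _ (2 * n + 1), mul_assoc]
  congr 1
  rw [hspin, bondWeight, bondWeight, hsucc]
  cases chainSpin true true s 1
  · simp [chainSpin, wallWeight, ← Real.exp_add]
  · simp [chainSpin, wallWeight]

theorem two_mul_Zplus (β : ℝ) (I : ℤ → ℝ) (n : ℕ) :
    2 * Zplus β I n = ∏ k ∈ range (2 * n + 2), (1 + wallWeight β I n k) +
      ∏ k ∈ range (2 * n + 2), (1 - wallWeight β I n k) := by
  simp_rw [Zplus, ← (configEquiv n).sum_comp, exp_neg_mul_Hplus_configEquiv]
  simpa using two_mul_sum_prod_bondWeight (wallWeight β I n) (2 * n + 1) true true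

theorem two_mul_Zpm (β : ℝ) (I : ℤ → ℝ) (n : ℕ) :
    2 * Zpm β I n = ∏ k ∈ range (2 * n + 2), (1 + wallWeight β I n k) -
      ∏ k ∈ range (2 * n + 2), (1 - wallWeight β I n k) := by
  simp_rw [Zpm, ← (configEquiv n).sum_comp, exp_neg_mul_Hpm_configEquiv]
  simpa [sub_eq_add_neg] using two_mul_sum_prod_bondWeight (wallWeight β I n) (2 * n + 1) false true

theorem Zpm_pos (β : ℝ) (I : ℤ → ℝ) (n : ℕ) : 0 < Zpm β I n :=
  sum_pos (fun _ _ => Real.exp_pos _) univ_nonempty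

noncomputable def tanhProd (β : ℝ) (I : ℤ → ℝ) (n : ℕ) : ℝ :=
  ∏ k ∈ range (2 * n + 2), Real.tanh (β * I (-n + k) / 2)

theorem Zplus_div_Zpm (β : ℝ) (I : ℤ → ℝ) (n : ℕ) :
    Zplus β I n / Zpm β I n = (1 + tanhProd β I n) / (1 - tanhProd β I n) := by
  have hP : ∏ k ∈ range (2 * n + 2), (1 + wallWeight β I n k) ≠ 0 :=
    (prod_pos fun k _ => by unfold wallWeight; positivity).ne'
  have htanh : tanhProd β I n = (∏ k ∈ range (2 * n + 2), (1 - wallWeight β I n k)) /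
      ∏ k ∈ range (2 * n + 2), (1 + wallWeight β I n k) := by
    rw [← prod_div_distrib]
    refine prod_congr rfl fun k _ => ?_
    rw [wallWeight, neg_mul, Real.one_sub_exp_neg_div_one_add_exp_neg]
  rw [htanh, ← mul_div_mul_left _ _ two_ne_zero, two_mul_Zplus, two_mul_Zpm,
    ← div_div_div_cancel_right₀ hP, add_div, sub_div, div_self hP]

theorem tendsto_tanhProd_of_periodic (β : ℝ) {I : ℤ → ℝ} {p : ℤ} (hI : Function.Periodic I p)
    (hp : 0 < p) : Filter.Tendsto (tanhProd β I) Filter.atTop (nhds 0) := by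
  obtain ⟨x₀, hx₀⟩ := (hI.comp fun J => |Real.tanh (β * J / 2)|).exists_forall_le_int hp
  set M := |Real.tanh (β * I x₀ / 2)|
  have hM : 0 ≤ M ∧ M < 1 := ⟨abs_nonneg _, Real.abs_tanh_lt_one _⟩
  refine squeeze_zero_norm (fun n => ?_) (tendsto_pow_atTop_nhds_zero_of_lt_one hM.1 hM.2)
  calc ‖tanhProd β I n‖ = ∏ k ∈ range (2 * n + 2), |Real.tanh (β * I (-n + k) / 2)| := by
        rw [Real.norm_eq_abs, tanhProd, abs_prod]
    _ ≤ ∏ k ∈ range (2 * n + 2), M := prod_le_prod (fun _ _ => abs_nonneg _) fun k _ => hx₀ _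
    _ = M ^ (2 * n + 2) := by rw [prod_const, card_range]
    _ ≤ M ^ n := pow_le_pow_of_le_one hM.1 hM.2.le (by omega)

theorem stmt_6_general (β : ℝ) (I : ℤ → ℝ)
    (p : ℕ) (hp : 1 ≤ p) (hper : ∀ m : ℤ, I (m + (p : ℤ)) = I m) :
    (∀ n : ℕ, 0 < Zpm β I n) ∧
    Filter.Tendsto (fun n : ℕ => Zplus β I n / Zpm β I n)
      Filter.atTop (nhds 1) := by
  refine ⟨Zpm_pos β I, ?_⟩
  simp_rw [Zplus_div_Zpm]
  exact tendsto_one_add_div_one_sub (tendsto_tanhProd_of_periodic β hper (by omega))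

/-- If the interactions satisfy the symmetry condition `I_n = I_{-n+1}` and are
periodic with some period `p ≥ 1`, then `Z_n^± > 0` for all `n` and the ratio
`Z_n^+/Z_n^±` tends to `1` as `n → ∞`. -/
theorem stmt_6 (β : ℝ) (hβ : 0 < β) (I : ℤ → ℝ)
    (hsym : ∀ n : ℤ, I n = I (-n + 1))
    (p : ℕ) (hp : 1 ≤ p) (hper : ∀ m : ℤ, I (m + (p : ℤ)) = I m) :
    (∀ n : ℕ, 0 < Zpm β I n) ∧
    Filter.Tendsto (fun n : ℕ => Zplus β I n / Zpm β I n)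
      Filter.atTop (nhds 1) :=
  stmt_6_general β I p hp hper
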